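/- Let u, v, w, z : ℝ × ℝ → ℝ satisfy the D_4 Toda system u_{xy} = -exp(2u - v), v_{xy} = -exp(-u + 2v - w - z), w_{xy} = -exp(-v + 2w), z_{xy} = -exp(-v + 2z). Then the quantity I_1 = -(u_{xx} + v_{xx} + z_{xx} + w_{xx} - u_x^2 - v_x^2 - z_x^2 - w_x^2 + u_x v_x + z_x v_x + w_x v_x) satisfies ∂_y I_1 = 0. -/

import Mathlib

noncomputable section

/-- Partial derivative in the first (x) variable. -/
def dx (f : ℝ × ℝ → ℝ) : ℝ × ℝ → ℝ := fun p => deriv (fun t => f (t, p.2)) p.1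

/-- Partial derivative in the second (y) variable. -/
def dy (f : ℝ × ℝ → ℝ) : ℝ × ℝ → ℝ := fun p => deriv (fun t => f (p.1, t)) p.2

/-- Iterated x-derivative. -/
def dxIter : ℕ → (ℝ × ℝ → ℝ) → (ℝ × ℝ → ℝ)
  | 0, f => f
  | n + 1, f => dx (dxIter n f)

/-- The first-order operator `(∂ + f)` applied to `ψ`. -/
def op (f ψ : ℝ × ℝ → ℝ) : ℝ × ℝ → ℝ := fun p => dx ψ p + f p * ψ p

/-- Composition `(∂ + f₁)(∂ + f₂)⋯(∂ + fₘ) ψ`, applying the rightmost factor first. -/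
def opProd : List (ℝ × ℝ → ℝ) → (ℝ × ℝ → ℝ) → (ℝ × ℝ → ℝ)
  | [], ψ => ψ
  | f :: fs, ψ => op f (opProd fs ψ)


lemma sliceX (f : ℝ × ℝ → ℝ) (hf : ContDiff ℝ (⊤ : ℕ∞) f) (p : ℝ × ℝ) :
    HasDerivAt (fun t => f (t, p.2)) (fderiv ℝ f p (1, 0)) p.1 := by
  have h := (hf.differentiable (by simp) p).hasFDerivAt
  have hg : HasDerivAt (fun t : ℝ => (t, p.2)) ((1:ℝ), (0:ℝ)) p.1 :=
    HasDerivAt.prodMk (hasDerivAt_id p.1) (hasDerivAt_const p.1 p.2)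
  exact h.comp_hasDerivAt p.1 hg

lemma sliceY (f : ℝ × ℝ → ℝ) (hf : ContDiff ℝ (⊤ : ℕ∞) f) (p : ℝ × ℝ) :
    HasDerivAt (fun t => f (p.1, t)) (fderiv ℝ f p (0, 1)) p.2 := by
  have h := (hf.differentiable (by simp) p).hasFDerivAt
  have hg : HasDerivAt (fun t : ℝ => (p.1, t)) ((0:ℝ), (1:ℝ)) p.2 :=
    HasDerivAt.prodMk (hasDerivAt_const p.2 p.1) (hasDerivAt_id p.2)
  exact h.comp_hasDerivAt p.2 hg

lemma dx_eq (f : ℝ × ℝ → ℝ) (hf : ContDiff ℝ (⊤ : ℕ∞) f) (p : ℝ × ℝ) :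
    dx f p = fderiv ℝ f p (1, 0) := (sliceX f hf p).deriv

lemma dy_eq (f : ℝ × ℝ → ℝ) (hf : ContDiff ℝ (⊤ : ℕ∞) f) (p : ℝ × ℝ) :
    dy f p = fderiv ℝ f p (0, 1) := (sliceY f hf p).deriv

lemma sliceX' (f : ℝ × ℝ → ℝ) (hf : ContDiff ℝ (⊤ : ℕ∞) f) (p : ℝ × ℝ) :
    HasDerivAt (fun t => f (t, p.2)) (dx f p) p.1 := by
  rw [dx_eq f hf p]; exact sliceX f hf p

lemma sliceY' (f : ℝ × ℝ → ℝ) (hf : ContDiff ℝ (⊤ : ℕ∞) f) (p : ℝ × ℝ) :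
    HasDerivAt (fun t => f (p.1, t)) (dy f p) p.2 := by
  rw [dy_eq f hf p]; exact sliceY f hf p

lemma dx_smooth (f : ℝ × ℝ → ℝ) (hf : ContDiff ℝ (⊤ : ℕ∞) f) : ContDiff ℝ (⊤ : ℕ∞) (dx f) := by
  have : dx f = fun p => fderiv ℝ f p (1, 0) := funext (dx_eq f hf)
  rw [this]
  exact (hf.fderiv_right (by simp)).clm_apply contDiff_const

lemma dy_smooth (f : ℝ × ℝ → ℝ) (hf : ContDiff ℝ (⊤ : ℕ∞) f) : ContDiff ℝ (⊤ : ℕ∞) (dy f) := by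
  have : dy f = fun p => fderiv ℝ f p (0, 1) := funext (dy_eq f hf)
  rw [this]
  exact (hf.fderiv_right (by simp)).clm_apply contDiff_const

lemma swap_dxdy (f : ℝ × ℝ → ℝ) (hf : ContDiff ℝ (⊤ : ℕ∞) f) (p : ℝ × ℝ) :
    dy (dx f) p = dx (dy f) p := by
  have hsym : IsSymmSndFDerivAt ℝ f p :=
    (hf.contDiffAt).isSymmSndFDerivAt (by rw [minSmoothness_of_isRCLikeNormedField]; exact WithTop.coe_le_coe.mpr (le_top : (2 : ℕ∞) ≤ ⊤))
  have hF : ContDiff ℝ (⊤ : ℕ∞) (fderiv ℝ f) := hf.fderiv_right (by simp)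
  have h1 : dy (dx f) p = fderiv ℝ (fderiv ℝ f) p (0, 1) (1, 0) := by
    rw [dy_eq _ (dx_smooth f hf) p]
    have : dx f = fun q => fderiv ℝ f q (1, 0) := funext (dx_eq f hf)
    rw [this, fderiv_clm_apply (hF.differentiable (by simp) p) (differentiableAt_const _)]
    simp
  have h2 : dx (dy f) p = fderiv ℝ (fderiv ℝ f) p (1, 0) (0, 1) := by
    rw [dx_eq _ (dy_smooth f hf) p]
    have : dy f = fun q => fderiv ℝ f q (0, 1) := funext (dy_eq f hf)
    rw [this, fderiv_clm_apply (hF.differentiable (by simp) p) (differentiableAt_const _)]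
    simp
  rw [h1, h2, hsym]

/-- For the `D₄` Toda system, the degree-2 characteristic integral
`I₁ = -(u_{xx} + v_{xx} + z_{xx} + w_{xx} - u_x² - v_x² - z_x² - w_x² + u_x v_x + z_x v_x + w_x v_x)`
satisfies `∂_y I₁ = 0`. -/
theorem stmt19 (u v w z : ℝ × ℝ → ℝ)
    (hu : ContDiff ℝ (⊤ : ℕ∞) u) (hv : ContDiff ℝ (⊤ : ℕ∞) v) (hw : ContDiff ℝ (⊤ : ℕ∞) w) (hz : ContDiff ℝ (⊤ : ℕ∞) z)
    (hueq : ∀ p, dy (dx u) p = -Real.exp (2 * u p - v p))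
    (hveq : ∀ p, dy (dx v) p = -Real.exp (-u p + 2 * v p - w p - z p))
    (hweq : ∀ p, dy (dx w) p = -Real.exp (-v p + 2 * w p))
    (hzeq : ∀ p, dy (dx z) p = -Real.exp (-v p + 2 * z p)) :
    ∀ p, dy (fun q => -(dx (dx u) q + dx (dx v) q + dx (dx z) q + dx (dx w) q
      - (dx u q) ^ 2 - (dx v q) ^ 2 - (dx z q) ^ 2 - (dx w q) ^ 2
      + dx u q * dx v q + dx z q * dx v q + dx w q * dx v q)) p = 0 := by
  intro p
  have hAu : dy (dx (dx u)) p = -(Real.exp (2 * u p - v p) * (2 * dx u p - dx v p)) := by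
    rw [swap_dxdy (dx u) (dx_smooth u hu) p, funext hueq]
    exact ((((sliceX' u hu p).const_mul 2).sub (sliceX' v hv p)).exp).neg.deriv
  have hAv : dy (dx (dx v)) p =
      -(Real.exp (-u p + 2 * v p - w p - z p) * (-dx u p + 2 * dx v p - dx w p - dx z p)) := by
    rw [swap_dxdy (dx v) (dx_smooth v hv) p, funext hveq]
    exact (((((sliceX' u hu p).neg.add ((sliceX' v hv p).const_mul 2)).sub
      (sliceX' w hw p)).sub (sliceX' z hz p)).exp).neg.deriv
  have hAz : dy (dx (dx z)) p = -(Real.exp (-v p + 2 * z p) * (-dx v p + 2 * dx z p)) := by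
    rw [swap_dxdy (dx z) (dx_smooth z hz) p, funext hzeq]
    exact ((((sliceX' v hv p).neg.add ((sliceX' z hz p).const_mul 2)).exp).neg).deriv
  have hAw : dy (dx (dx w)) p = -(Real.exp (-v p + 2 * w p) * (-dx v p + 2 * dx w p)) := by
    rw [swap_dxdy (dx w) (dx_smooth w hw) p, funext hweq]
    exact ((((sliceX' v hv p).neg.add ((sliceX' w hw p).const_mul 2)).exp).neg).deriv
  have HA := sliceY' (dx (dx u)) (dx_smooth _ (dx_smooth u hu)) p
  have HB := sliceY' (dx (dx v)) (dx_smooth _ (dx_smooth v hv)) p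
  have HC := sliceY' (dx (dx z)) (dx_smooth _ (dx_smooth z hz)) p
  have HD := sliceY' (dx (dx w)) (dx_smooth _ (dx_smooth w hw)) p
  have Ha := sliceY' (dx u) (dx_smooth u hu) p
  have Hb := sliceY' (dx v) (dx_smooth v hv) p
  have Hc := sliceY' (dx z) (dx_smooth z hz) p
  have Hd := sliceY' (dx w) (dx_smooth w hw) p
  have H := ((((((((((HA.add HB).add HC).add HD).sub (Ha.pow 2)).sub (Hb.pow 2)).sub
    (Hc.pow 2)).sub (Hd.pow 2)).add (Ha.mul Hb)).add (Hc.mul Hb)).add (Hd.mul Hb)).neg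
  have hval := H.deriv
  have hgoal : dy (fun q => -(dx (dx u) q + dx (dx v) q + dx (dx z) q + dx (dx w) q
      - (dx u q) ^ 2 - (dx v q) ^ 2 - (dx z q) ^ 2 - (dx w q) ^ 2
      + dx u q * dx v q + dx z q * dx v q + dx w q * dx v q)) p =
      -(dy (dx (dx u)) p + dy (dx (dx v)) p + dy (dx (dx z)) p + dy (dx (dx w)) p
      - 2 * dx u p ^ 1 * dy (dx u) p - 2 * dx v p ^ 1 * dy (dx v) p
      - 2 * dx z p ^ 1 * dy (dx z) p - 2 * dx w p ^ 1 * dy (dx w) p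
      + (dy (dx u) p * dx v p + dx u p * dy (dx v) p)
      + (dy (dx z) p * dx v p + dx z p * dy (dx v) p)
      + (dy (dx w) p * dx v p + dx w p * dy (dx v) p)) := by
    exact_mod_cast hval
  rw [hgoal, hAu, hAv, hAz, hAw, hueq p, hveq p, hweq p, hzeq p]
  ring
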